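/- Let G be a locally compact second countable Hausdorff unimodular group with Haar measure μ_G, U an irreducible square-integrable unitary representation of G on a separable Hilbert space H (normalized so that the orthogonality constant is 1), and T a positive trace-one operator on H. Then the map E(X) = ∫_X U(g) T U(g)⁻¹ dμ_G(g) (weak integral over Borel sets X of G) defines a normalized positive operator valued measure based on G which is covariant: U(g₀)E(X)U(g₀)⁻¹ = E(g₀X) for all g₀ ∈ G and Borel X. -/

import Mathlib

/-!
Polarizing the orthogonality relations gives `∫ conj ⟪U g a, u⟫ ⟪U g a, v⟫ dμ = ‖a‖² ⟪u, v⟫`.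
Expanding `T = ∑ λₙ |eₙ⟩⟨eₙ|` writes the integrand `⟪U(g)⁻¹ u, T U(g)⁻¹ v⟫` of `E` as
`∑ λₙ conj ⟪U g eₙ, u⟫ ⟪U g eₙ, v⟫`, a series whose terms have `L¹` norms at most
`λₙ (‖u‖² + ‖v‖²) / 2`; integrating term by term gives `E(G) = (∑ λₙ) I = I`.
Positivity of `E(X)` is inherited from that of `T`, σ-additivity from that of the integral,
and covariance from the left invariance of `μ`.
-/

open MeasureTheory Complex
open scoped ComplexOrder ComplexConjugate InnerProductSpace

section Polarization

variable {α H F : Type*} [NormedAddCommGroup H] [InnerProductSpace ℂ H]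
  [NormedAddCommGroup F] [InnerProductSpace ℂ F]

theorem inner_eq_polarization_complex (x y : F) :
    ⟪x, y⟫_ℂ = ((‖x + y‖ : ℂ) ^ 2 - (‖x - y‖ : ℂ) ^ 2 +
      ((‖x - I • y‖ : ℂ) ^ 2 - (‖x + I • y‖ : ℂ) ^ 2) * I) / 4 := by
  simpa using inner_eq_sum_norm_sq_div_four (𝕜 := ℂ) x y

theorem LinearMap.inner_apply_eq_polarization (L : H →ₗ[ℂ] α → F) (u v : H) (a : α) :
    ⟪L u a, L v a⟫_ℂ = ((‖L (u + v) a‖ : ℂ) ^ 2 - (‖L (u - v) a‖ : ℂ) ^ 2 +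
      ((‖L (u - I • v) a‖ : ℂ) ^ 2 - (‖L (u + I • v) a‖ : ℂ) ^ 2) * I) / 4 := by
  simpa using inner_eq_polarization_complex (L u a) (L v a)

variable [MeasurableSpace α] {μ : Measure α} (L : H →ₗ[ℂ] α → F)
  (hint : ∀ w, Integrable (fun a => ‖L w a‖ ^ 2) μ)
include hint

theorem integrable_inner_of_integrable_norm_sq (u v : H) :
    Integrable (fun a => ⟪L u a, L v a⟫_ℂ) μ := by
  have hq : ∀ w, Integrable (fun a => (‖L w a‖ : ℂ) ^ 2) μ := fun w => by
    simp only [← ofReal_pow]; exact (hint w).ofReal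
  simp only [L.inner_apply_eq_polarization]
  exact (((hq _).sub (hq _)).add (((hq _).sub (hq _)).mul_const I)).div_const 4

theorem integral_inner_of_integral_norm_sq {c : ℝ}
    (hL : ∀ w, ∫ a, ‖L w a‖ ^ 2 ∂μ = c * ‖w‖ ^ 2) (u v : H) :
    ∫ a, ⟪L u a, L v a⟫_ℂ ∂μ = c * ⟪u, v⟫_ℂ := by
  have hq : ∀ w, Integrable (fun a => (‖L w a‖ : ℂ) ^ 2) μ := fun w => by
    simp only [← ofReal_pow]; exact (hint w).ofReal
  have hq' : ∀ w, ∫ a, (‖L w a‖ : ℂ) ^ 2 ∂μ = c * (‖w‖ : ℂ) ^ 2 := fun w => by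
    simp only [← ofReal_pow]
    rw [integral_complex_ofReal, hL w]
    push_cast
    ring
  have hre : Integrable (fun a => (‖L (u + v) a‖ : ℂ) ^ 2 - (‖L (u - v) a‖ : ℂ) ^ 2) μ :=
    (hq _).sub (hq _)
  have him : Integrable (fun a =>
      ((‖L (u - I • v) a‖ : ℂ) ^ 2 - (‖L (u + I • v) a‖ : ℂ) ^ 2) * I) μ :=
    ((hq _).sub (hq _)).mul_const I
  simp only [L.inner_apply_eq_polarization]
  rw [integral_div, integral_add hre him, integral_sub (hq _) (hq _), integral_mul_const,
    integral_sub (hq _) (hq _), hq', hq', hq', hq', inner_eq_polarization_complex u v]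
  ring

end Polarization

section SummableIntegralNorm

variable {α E : Type*} [MeasurableSpace α] {μ : Measure α} [NormedAddCommGroup E]

theorem integrable_of_hasSum_of_summable_integral_norm {ι : Type*} [Countable ι]
    {F : ι → α → E} {f : α → E} (hF_int : ∀ i, Integrable (F i) μ)
    (hF_sum : Summable fun i => ∫ a, ‖F i a‖ ∂μ) (hf : ∀ a, HasSum (F · a) (f a)) :
    Integrable f μ := by
  refine ⟨aestronglyMeasurable_of_tendsto_ae (f := fun s a => ∑ i ∈ s, F i a) Filter.atTop
    (fun s => Finset.aestronglyMeasurable_fun_sum s fun i _ => (hF_int i).1)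
    (Filter.Eventually.of_forall hf), ?_⟩
  calc ∫⁻ a, ‖f a‖ₑ ∂μ ≤ ∫⁻ a, ∑' i, ‖F i a‖ₑ ∂μ :=
        lintegral_mono fun a => (hf a).tsum_eq ▸ enorm_tsum_le_tsum_enorm
    _ = ∑' i, ENNReal.ofReal (∫ a, ‖F i a‖ ∂μ) := by
        rw [lintegral_tsum fun i => (hF_int i).1.enorm]
        simp only [ofReal_integral_norm_eq_lintegral_enorm (hF_int _)]
    _ = ENNReal.ofReal (∑' i, ∫ a, ‖F i a‖ ∂μ) :=
        (ENNReal.ofReal_tsum_of_nonneg (fun i => integral_nonneg fun a => norm_nonneg _)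
          hF_sum).symm
    _ < ⊤ := ENNReal.ofReal_lt_top

end SummableIntegralNorm

section SpectralDecomposition

variable {H : Type*} [NormedAddCommGroup H] [InnerProductSpace ℂ H]
  {T : H →L[ℂ] H} {lam : ℕ → ℝ} {e : ℕ → H}

theorem hasSum_inner_apply_of_hasSum
    (hT : ∀ v, HasSum (fun n => ((lam n : ℂ) * ⟪e n, v⟫_ℂ) • e n) (T v)) (x y : H) :
    HasSum (fun n => (lam n : ℂ) * (conj ⟪e n, x⟫_ℂ * ⟪e n, y⟫_ℂ)) ⟪x, T y⟫_ℂ := by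
  have h := (hT y).mapL (innerSL ℂ x)
  simp only [innerSL_apply_apply, inner_smul_right] at h
  simpa only [inner_conj_symm, mul_comm, mul_left_comm] using h

theorem isPositive_of_hasSum (hlam : ∀ n, 0 ≤ lam n)
    (hT : ∀ v, HasSum (fun n => ((lam n : ℂ) * ⟪e n, v⟫_ℂ) • e n) (T v)) : T.IsPositive := by
  have hsymm : ∀ x y, ⟪T x, y⟫_ℂ = ⟪x, T y⟫_ℂ := fun x y => by
    rw [← inner_conj_symm]
    refine (hasSum_conj'.mpr (hasSum_inner_apply_of_hasSum hT y x)).unique ?_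
    convert hasSum_inner_apply_of_hasSum hT x y using 1
    funext n
    simp only [map_mul, conj_ofReal, conj_conj]
    ring
  refine (T.isPositive_iff).mpr ⟨hsymm, fun x => ?_⟩
  rw [hsymm]
  exact (hasSum_inner_apply_of_hasSum hT x x).nonneg fun n =>
    mul_nonneg (zero_le_real.mpr (hlam n)) (star_mul_self_nonneg _)

end SpectralDecomposition

section WeakIntegral

variable {α H : Type*} [MeasurableSpace α] [NormedAddCommGroup H] [InnerProductSpace ℂ H]

theorem isPositive_of_inner_eq_integral {ν : Measure α} {T A : H →L[ℂ] H} (hT : T.IsPositive)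
    (S : α → H → H) (hA : ∀ u v, ⟪u, A v⟫_ℂ = ∫ a, ⟪S a u, T (S a v)⟫_ℂ ∂ν) :
    A.IsPositive := by
  have hsymm : ∀ x y, ⟪A x, y⟫_ℂ = ⟪x, A y⟫_ℂ := fun x y => by
    rw [← inner_conj_symm, hA, hA, ← integral_conj]
    simp only [inner_conj_symm, hT.inner_left_eq_inner_right]
  refine (A.isPositive_iff).mpr ⟨hsymm, fun x => ?_⟩
  rw [hsymm, hA]
  exact integral_nonneg fun a => hT.inner_nonneg_right _

theorem hasSum_inner_of_inner_eq_setIntegral {μ : Measure α} (E : Set α → H →L[ℂ] H)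
    (f : H → H → α → ℂ) (hf : ∀ u v, Integrable (f u v) μ)
    (hE : ∀ X, MeasurableSet X → ∀ u v, ⟪u, E X v⟫_ℂ = ∫ a in X, f u v a ∂μ)
    {X : ℕ → Set α} (hX : ∀ n, MeasurableSet (X n)) (hdisj : Pairwise (Function.onFun Disjoint X))
    (u v : H) : HasSum (fun n => ⟪E (X n) u, v⟫_ℂ) ⟪E (⋃ n, X n) u, v⟫_ℂ := by
  simp only [← inner_conj_symm (E _ u), hE _ (hX _), hE _ (MeasurableSet.iUnion hX)]
  exact hasSum_conj'.mpr (hasSum_integral_iUnion hX hdisj (hf v u).integrableOn)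

end WeakIntegral

section Covariance

variable {G H : Type*} [Group G] [MeasurableSpace G] [MeasurableMul G] {μ : Measure G}
  [μ.IsMulLeftInvariant] [NormedAddCommGroup H] [InnerProductSpace ℂ H]

theorem apply_apply_symm_eq_mulLeft_image {U : G → (H ≃ₗᵢ[ℂ] H)}
    (hgrp : ∀ g g' : G, U (g * g') = (U g').trans (U g)) {T : H → H} (E : Set G → H →L[ℂ] H)
    (hE : ∀ X, MeasurableSet X → ∀ u v,
      ⟪u, E X v⟫_ℂ = ∫ g in X, ⟪(U g).symm u, T ((U g).symm v)⟫_ℂ ∂μ)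
    (g₀ : G) {X : Set G} (hX : MeasurableSet X) (v : H) :
    U g₀ (E X ((U g₀).symm v)) = E ((g₀ * ·) '' X) v := by
  refine ext_inner_left ℂ fun u => ?_
  conv_lhs => rw [← (U g₀).apply_symm_apply u, LinearIsometryEquiv.inner_map_map]
  rw [hE X hX,
    hE _ ((measurableEmbedding_mulLeft g₀).measurableSet_image' hX),
    (measurePreserving_mul_left μ g₀).setIntegral_image_emb (measurableEmbedding_mulLeft g₀)]
  simp only [hgrp, LinearIsometryEquiv.symm_trans, LinearIsometryEquiv.trans_apply]

end Covariance

section Representation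

variable {G H : Type*} [NormedAddCommGroup H] [InnerProductSpace ℂ H] {U : G → (H ≃ₗᵢ[ℂ] H)}
  {T : H →L[ℂ] H} {lam : ℕ → ℝ} {e : ℕ → H}

theorem hasSum_inner_symm_apply_symm
    (hT : ∀ v, HasSum (fun n => ((lam n : ℂ) * ⟪e n, v⟫_ℂ) • e n) (T v)) (u v : H) (g : G) :
    HasSum (fun n => (lam n : ℂ) * (conj ⟪U g (e n), u⟫_ℂ * ⟪U g (e n), v⟫_ℂ))
      ⟪(U g).symm u, T ((U g).symm v)⟫_ℂ := by
  simpa only [LinearIsometryEquiv.inner_map_eq_flip] using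
    hasSum_inner_apply_of_hasSum hT ((U g).symm u) ((U g).symm v)

variable [MeasurableSpace G] {μ : Measure G}
  (hsq : ∀ u v : H, ∫ g, ‖⟪U g u, v⟫_ℂ‖ ^ 2 ∂μ = ‖u‖ ^ 2 * ‖v‖ ^ 2)
include hsq

theorem integrable_norm_inner_sq (a w : H) : Integrable (fun g => ‖⟪U g a, w⟫_ℂ‖ ^ 2) μ := by
  rcases eq_or_ne a 0 with rfl | ha
  · simp
  rcases eq_or_ne w 0 with rfl | hw
  · simp
  -- a non-integrable function has Bochner integral `0`, which `hsq` rules out here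
  exact Integrable.of_integral_ne_zero (by rw [hsq]; positivity)

theorem integrable_conj_inner_mul_inner (a u v : H) :
    Integrable (fun g => conj ⟪U g a, u⟫_ℂ * ⟪U g a, v⟫_ℂ) μ := by
  simpa only [LinearMap.pi_apply, innerₛₗ_apply_apply, RCLike.inner_apply'] using
    integrable_inner_of_integrable_norm_sq (LinearMap.pi fun g => innerₛₗ ℂ (U g a))
      (integrable_norm_inner_sq hsq a) u v

theorem integral_conj_inner_mul_inner (a u v : H) :
    ∫ g, conj ⟪U g a, u⟫_ℂ * ⟪U g a, v⟫_ℂ ∂μ = ‖a‖ ^ 2 * ⟪u, v⟫_ℂ := by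
  have h := integral_inner_of_integral_norm_sq (LinearMap.pi fun g => innerₛₗ ℂ (U g a))
    (integrable_norm_inner_sq hsq a) (c := ‖a‖ ^ 2) (fun w => hsq a w) u v
  simp only [LinearMap.pi_apply, innerₛₗ_apply_apply, RCLike.inner_apply'] at h
  exact_mod_cast h

theorem integral_norm_conj_inner_mul_inner_le (a u v : H) :
    ∫ g, ‖conj ⟪U g a, u⟫_ℂ * ⟪U g a, v⟫_ℂ‖ ∂μ ≤ ‖a‖ ^ 2 * ((‖u‖ ^ 2 + ‖v‖ ^ 2) / 2) := by
  have hu := integrable_norm_inner_sq hsq a u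
  have hv := integrable_norm_inner_sq hsq a v
  calc _ ≤ ∫ g, (‖⟪U g a, u⟫_ℂ‖ ^ 2 + ‖⟪U g a, v⟫_ℂ‖ ^ 2) / 2 ∂μ :=
        integral_mono (integrable_conj_inner_mul_inner hsq a u v).norm
          ((hu.add hv).div_const 2) fun g => by
            rw [norm_mul, RCLike.norm_conj]
            linarith [two_mul_le_add_sq ‖⟪U g a, u⟫_ℂ‖ ‖⟪U g a, v⟫_ℂ‖]
    _ = _ := by
        rw [integral_div, integral_add hu hv, hsq, hsq]
        ring

variable (hlam : ∀ n, 0 ≤ lam n) (hnorm : ∀ n, ‖e n‖ = 1)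
include hlam hnorm

theorem summable_integral_norm_mul_conj_inner_mul_inner (hsum : Summable lam) (u v : H) :
    Summable fun n => ∫ g, ‖(lam n : ℂ) * (conj ⟪U g (e n), u⟫_ℂ * ⟪U g (e n), v⟫_ℂ)‖ ∂μ := by
  refine Summable.of_nonneg_of_le (fun n => integral_nonneg fun g => norm_nonneg _)
    (fun n => ?_) (hsum.mul_right ((‖u‖ ^ 2 + ‖v‖ ^ 2) / 2))
  have h := integral_norm_conj_inner_mul_inner_le hsq (e n) u v
  rw [hnorm, one_pow, one_mul] at h
  simp_rw [norm_mul (lam n : ℂ), norm_real, Real.norm_of_nonneg (hlam n)]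
  rw [integral_const_mul]
  exact mul_le_mul_of_nonneg_left h (hlam n)

variable (hT : ∀ v, HasSum (fun n => ((lam n : ℂ) * ⟪e n, v⟫_ℂ) • e n) (T v))
include hT

theorem integrable_inner_symm_apply_symm (hsum : Summable lam) (u v : H) :
    Integrable (fun g => ⟪(U g).symm u, T ((U g).symm v)⟫_ℂ) μ :=
  integrable_of_hasSum_of_summable_integral_norm
    (fun n => (integrable_conj_inner_mul_inner hsq (e n) u v).const_mul _)
    (summable_integral_norm_mul_conj_inner_mul_inner hsq hlam hnorm hsum u v)
    (hasSum_inner_symm_apply_symm hT u v)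

theorem integral_inner_symm_apply_symm (htr : HasSum lam 1) (u v : H) :
    ∫ g, ⟪(U g).symm u, T ((U g).symm v)⟫_ℂ ∂μ = ⟪u, v⟫_ℂ := by
  rw [funext fun g => (hasSum_inner_symm_apply_symm hT u v g).tsum_eq.symm]
  have h := hasSum_integral_of_summable_integral_norm
    (fun n => (integrable_conj_inner_mul_inner hsq (e n) u v).const_mul (lam n : ℂ))
    (summable_integral_norm_mul_conj_inner_mul_inner hsq hlam hnorm htr.summable u v)
  simp only [integral_const_mul, integral_conj_inner_mul_inner hsq, hnorm, one_pow, ofReal_one,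
    one_mul] at h
  simpa using h.unique ((hasSum_ofReal.mpr htr).mul_right ⟪u, v⟫_ℂ)

end Representation

theorem stmt14 {G : Type*} [Group G] [TopologicalSpace G] [IsTopologicalGroup G]
    [MeasurableSpace G] [BorelSpace G]
    (μ : Measure G) [μ.IsHaarMeasure]
    {H : Type*} [NormedAddCommGroup H] [InnerProductSpace ℂ H]
    (U : G → (H ≃ₗᵢ[ℂ] H))
    (hgrp : ∀ g g' : G, U (g * g') = (U g').trans (U g))
    (hsq : ∀ u v : H, ∫ g, ‖(inner ℂ (U g u) v : ℂ)‖ ^ 2 ∂μ = ‖u‖ ^ 2 * ‖v‖ ^ 2)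
    (T : H →L[ℂ] H) (lam : ℕ → ℝ) (e : ℕ → H)
    (hlam : ∀ n, 0 ≤ lam n) (hON : Orthonormal ℂ e) (htr : HasSum lam 1)
    (hT : ∀ v : H, HasSum (fun n => ((lam n : ℂ) * (inner ℂ (e n) v : ℂ)) • e n) (T v))
    (E : Set G → (H →L[ℂ] H))
    (hE : ∀ X : Set G, MeasurableSet X → ∀ u v : H,
      (inner ℂ u (E X v) : ℂ) = ∫ g in X, (inner ℂ u (U g (T ((U g).symm v))) : ℂ) ∂μ) :
    (∀ X : Set G, MeasurableSet X → (E X).IsPositive) ∧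
    E Set.univ = 1 ∧
    (∀ X : ℕ → Set G, (∀ n, MeasurableSet (X n)) → Pairwise (Function.onFun Disjoint X) →
      ∀ f g : H, HasSum (fun n => (inner ℂ (E (X n) f) g : ℂ))
        (inner ℂ (E (⋃ n, X n) f) g)) ∧
    (∀ g₀ : G, ∀ X : Set G, MeasurableSet X → ∀ v : H,
      U g₀ (E X ((U g₀).symm v)) = E ((g₀ * ·) '' X) v) := by
  have hE' : ∀ X, MeasurableSet X → ∀ u v,
      ⟪u, E X v⟫_ℂ = ∫ g in X, ⟪(U g).symm u, T ((U g).symm v)⟫_ℂ ∂μ := fun X hX u v => by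
    simp only [hE X hX, LinearIsometryEquiv.inner_map_eq_flip, LinearIsometryEquiv.symm_symm]
  refine ⟨fun X hX => isPositive_of_inner_eq_integral (isPositive_of_hasSum hlam hT) _ (hE' X hX),
    ?_, fun X hX hdisj => hasSum_inner_of_inner_eq_setIntegral E _
      (integrable_inner_symm_apply_symm hsq hlam hON.1 hT htr.summable) hE' hX hdisj,
    fun g₀ X hX => apply_apply_symm_eq_mulLeft_image hgrp E hE' g₀ hX⟩
  ext v
  refine ext_inner_left ℂ fun u => ?_
  rw [hE' _ MeasurableSet.univ, Measure.restrict_univ,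
    integral_inner_symm_apply_symm hsq hlam hON.1 hT htr]
  rfl
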